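/- The range of the 1-D lifting map ℓ : [t¹, t^L] → ℝ^L equals the set of z ∈ [0,1]^L such that there exists an index l ∈ {1,...,L-1} with z_l + z_{l+1} = 1 and z_k = 0 for all k ∉ {l, l+1}. -/

import Mathlib

/-!
On each knot interval `[t l, t (l+1)]` the lifting map is the affine reparametrisation
`lineMap (t l) (t (l+1)) s ↦ lineMap (e l) (e (l+1)) s`, where `e l = Pi.single l 1`, so it maps
that interval onto the segment `[e l, e (l+1)]`. The knot intervals cover `[t 0, t (n+1)]`, and
the set on the right is exactly the union of these segments.
-/

/-- `ℓ` is the 1-D lifting map with respect to knots `t 0 < t 1 < ... < t (n+1)`: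
for `x ∈ [t l, t (l+1)]`, `ℓ x` has `l`-th coordinate `(t (l+1) - x)/(t (l+1) - t l)`,
`(l+1)`-th coordinate `(x - t l)/(t (l+1) - t l)`, and zeros elsewhere. -/
def IsLifting {n : ℕ} (t : Fin (n + 2) → ℝ) (ℓ : ℝ → Fin (n + 2) → ℝ) : Prop :=
  ∀ l : Fin (n + 1), ∀ x ∈ Set.Icc (t l.castSucc) (t l.succ),
    ℓ x = fun k =>
      if k = l.castSucc then (t l.succ - x) / (t l.succ - t l.castSucc)
      else if k = l.succ then (x - t l.castSucc) / (t l.succ - t l.castSucc)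
      else 0

open Set AffineMap

theorem Fin.exists_mem_Icc_castSucc_succ {α : Type*} [LinearOrder α] {n : ℕ}
    (t : Fin (n + 2) → α) {x : α} (hx : x ∈ Icc (t 0) (t (Fin.last (n + 1)))) :
    ∃ l : Fin (n + 1), x ∈ Icc (t l.castSucc) (t l.succ) := by
  by_contra! h
  simp only [mem_Icc, not_and, not_le] at h
  have hle : ∀ k, t k ≤ x := Fin.induction hx.1 fun l hl => (h l hl).le
  exact (h (Fin.last n) (hle _)).not_ge (Fin.succ_last n ▸ hx.2)

theorem Monotone.Icc_eq_iUnion_Icc_castSucc_succ {α : Type*} [LinearOrder α] {n : ℕ}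
    {t : Fin (n + 2) → α} (ht : Monotone t) :
    Icc (t 0) (t (Fin.last (n + 1))) = ⋃ l : Fin (n + 1), Icc (t l.castSucc) (t l.succ) := by
  refine Subset.antisymm (fun x hx => mem_iUnion.2 (Fin.exists_mem_Icc_castSucc_succ t hx)) ?_
  exact iUnion_subset fun l => Icc_subset_Icc (ht (Fin.zero_le _)) (ht (Fin.le_last _))

theorem mem_segment_single_one_iff {𝕜 ι : Type*} [Semiring 𝕜] [PartialOrder 𝕜] [IsOrderedRing 𝕜]
    [DecidableEq ι] {i j : ι} (hij : i ≠ j) {z : ι → 𝕜} :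
    z ∈ segment 𝕜 (Pi.single i 1) (Pi.single j 1) ↔
      (∀ k, z k ∈ Icc 0 1) ∧ z i + z j = 1 ∧ ∀ k, k ≠ i → k ≠ j → z k = 0 := by
  constructor
  · rintro ⟨a, b, ha, hb, hab, rfl⟩
    have hi : (a • Pi.single i 1 + b • Pi.single j 1 : ι → 𝕜) i = a := by simp [hij]
    have hj : (a • Pi.single i 1 + b • Pi.single j 1 : ι → 𝕜) j = b := by simp [Ne.symm hij]
    have hk : ∀ k, k ≠ i → k ≠ j → (a • Pi.single i 1 + b • Pi.single j 1 : ι → 𝕜) k = 0 := by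
      intro k hki hkj; simp [hki, hkj]
    refine ⟨fun k => ?_, by rw [hi, hj, hab], hk⟩
    by_cases hki : k = i
    · subst hki; rw [hi, ← hab]; exact ⟨ha, le_add_of_nonneg_right hb⟩
    by_cases hkj : k = j
    · subst hkj; rw [hj, ← hab]; exact ⟨hb, le_add_of_nonneg_left ha⟩
    rw [hk k hki hkj]; exact ⟨le_rfl, zero_le_one⟩
  · rintro ⟨h01, hsum, hzero⟩
    refine ⟨z i, z j, (h01 i).1, (h01 j).1, hsum, funext fun k => ?_⟩
    by_cases hki : k = i
    · subst hki; simp [hij]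
    · by_cases hkj : k = j
      · subst hkj; simp [hki]
      · simp [hki, hkj, hzero k hki hkj]

section Lifting

variable {n : ℕ} {t : Fin (n + 2) → ℝ} {ℓ : ℝ → Fin (n + 2) → ℝ}

theorem IsLifting.apply_lineMap (hℓ : IsLifting t ℓ) {l : Fin (n + 1)}
    (ht : t l.castSucc < t l.succ) {s : ℝ} (hs : s ∈ Icc (0 : ℝ) 1) :
    ℓ (lineMap (t l.castSucc) (t l.succ) s) =
      lineMap (Pi.single l.castSucc 1 : Fin (n + 2) → ℝ) (Pi.single l.succ 1) s := by
  have hx : lineMap (t l.castSucc) (t l.succ) s ∈ Icc (t l.castSucc) (t l.succ) := by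
    rw [← segment_eq_Icc ht.le, segment_eq_image_lineMap]; exact mem_image_of_mem _ hs
  have hne : (t l.succ - t l.castSucc) ≠ 0 := (sub_pos.2 ht).ne'
  rw [hℓ l _ hx]
  funext k
  simp only [lineMap_apply_ring', lineMap_apply_module']
  have hl : l.castSucc ≠ l.succ := Fin.castSucc_lt_succ.ne
  split_ifs with h1 h2
  · subst h1
    simp only [Pi.add_apply, Pi.smul_apply, Pi.sub_apply, Pi.single_eq_of_ne hl,
      Pi.single_eq_same, smul_eq_mul]
    field_simp
    ring
  · subst h2
    simp only [Pi.add_apply, Pi.smul_apply, Pi.sub_apply, Pi.single_eq_of_ne hl.symm,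
      Pi.single_eq_same, smul_eq_mul]
    field_simp
    ring
  · simp [h1, h2]

theorem IsLifting.image_Icc (hℓ : IsLifting t ℓ) {l : Fin (n + 1)}
    (ht : t l.castSucc < t l.succ) :
    ℓ '' Icc (t l.castSucc) (t l.succ) =
      segment ℝ (Pi.single l.castSucc 1) (Pi.single l.succ 1) := by
  rw [← segment_eq_Icc ht.le, segment_eq_image_lineMap, segment_eq_image_lineMap, image_image]
  exact image_congr fun s hs => hℓ.apply_lineMap ht hs

end Lifting

theorem lifting_range {n : ℕ} (t : Fin (n + 2) → ℝ) (ℓ : ℝ → Fin (n + 2) → ℝ)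
    (ht : StrictMono t) (hℓ : IsLifting t ℓ) :
    ℓ '' Set.Icc (t 0) (t (Fin.last (n + 1))) =
      {z : Fin (n + 2) → ℝ | (∀ k, z k ∈ Set.Icc (0 : ℝ) 1) ∧
        ∃ l : Fin (n + 1), z l.castSucc + z l.succ = 1 ∧
          ∀ k, k ≠ l.castSucc → k ≠ l.succ → z k = 0} := by
  rw [ht.monotone.Icc_eq_iUnion_Icc_castSucc_succ, image_iUnion]
  ext z
  simp only [hℓ.image_Icc (ht Fin.castSucc_lt_succ), mem_iUnion,
    mem_segment_single_one_iff Fin.castSucc_lt_succ.ne, mem_ofPred_eq, exists_and_left]
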